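/- arXiv:1201.2502 — 2 statements merged into one kernel-verified Lean document; each statement's English description precedes it below -/
import Mathlib

section
/- For every integer n ≥ 1, every integer k ≥ 0, and every l with 0 ≤ l ≤ 2^n − 1, one has Σ^{2^n k + l}_n = −u_k · Σ^l_n. In particular, Σ^{2^n k}_n = 0 for every k. -/
/-- The ±1 Thue–Morse sequence: `u n = (-1)^(s₂(n)+1)` where `s₂` is the binary digit sum. -/
def u (n : ℕ) : ℤ := (-1) ^ ((Nat.digits 2 n).sum + 1)

/-- The "Pascal triangle" associated to the Thue–Morse sequence:
`Sig k n` is `Σ^k_n` (k the superscript, n the subscript). -/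
def Sig : ℕ → ℕ → ℤ
  | k, 0 => u k
  | 0, _ + 1 => 0
  | k + 1, n + 1 => Sig k n + Sig k (n + 1)

/-!
Unfolding the recursion in `k`, column `n + 1` of `Σ` is the sequence of prefix sums of column
`n`, and column `0` is `u`. Call `f` twisted `p`-periodic if `f (p * k + l) = -u k * f l` for
`l < p`. Splitting a prefix sum `F` of such an `f` into blocks of length `p` gives
`F (p * q + r) = -u q * F r - (∑_{b < q} u b) * F p` for `r ≤ p`; as `u (2b) + u (2b + 1) = 0`,
the partial sums of `u` are `0` at even and `u k` at odd lengths `2k + 1`, which makes `F`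
twisted `2p`-periodic. So column `n` is twisted `2 ^ n`-periodic, and it vanishes at `0` for
`n ≥ 1`.
-/

lemma u_zero : u 0 = -1 := by simp [u]

lemma u_two_mul (k : ℕ) : u (2 * k) = u k := by
  rcases Nat.eq_zero_or_pos k with rfl | hk
  · rfl
  rw [u, u, ← zero_add (2 * k), Nat.digits_add 2 one_lt_two 0 k two_pos (Or.inr hk.ne'),
    List.sum_cons, zero_add]

lemma u_two_mul_add_one (k : ℕ) : u (2 * k + 1) = -u k := by
  rw [u, u, add_comm (2 * k), Nat.digits_add 2 one_lt_two 1 k one_lt_two (Or.inl one_ne_zero),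
    List.sum_cons, add_comm 1, pow_succ, mul_neg_one]

lemma sum_range_u_two_mul (k : ℕ) : ∑ b ∈ Finset.range (2 * k), u b = 0 := by
  induction k with
  | zero => rfl
  | succ k ih =>
    rw [Nat.mul_succ, Finset.sum_range_succ, Finset.sum_range_succ, ih, u_two_mul_add_one,
      u_two_mul]
    ring

lemma sum_range_u_two_mul_add_one (k : ℕ) : ∑ b ∈ Finset.range (2 * k + 1), u b = u k := by
  rw [Finset.sum_range_succ, sum_range_u_two_mul, u_two_mul, zero_add]

lemma Sig_zero_right (k : ℕ) : Sig k 0 = u k := by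
  cases k <;> rfl

lemma Sig_succ_right (k n : ℕ) : Sig k (n + 1) = ∑ j ∈ Finset.range k, Sig j n := by
  induction k with
  | zero => rfl
  | succ k ih => rw [Finset.sum_range_succ, ← ih]; exact add_comm _ _

def TwistedPeriodic (p : ℕ) (f : ℕ → ℤ) : Prop :=
  ∀ k l, l < p → f (p * k + l) = -u k * f l

namespace TwistedPeriodic

variable {p : ℕ} {f : ℕ → ℤ}

lemma sum_range_mul_add (hf : TwistedPeriodic p f) (q : ℕ) {r : ℕ} (hr : r ≤ p) :
    ∑ j ∈ Finset.range (p * q + r), f j = -u q * ∑ j ∈ Finset.range r, f j +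
      ∑ j ∈ Finset.range (p * q), f j := by
  rw [Finset.sum_range_add, add_comm, Finset.mul_sum]
  congr 1
  exact Finset.sum_congr rfl fun l hl => hf q l ((Finset.mem_range.1 hl).trans_le hr)

lemma sum_range_mul (hf : TwistedPeriodic p f) (q : ℕ) :
    ∑ j ∈ Finset.range (p * q), f j =
      -(∑ b ∈ Finset.range q, u b) * ∑ j ∈ Finset.range p, f j := by
  induction q with
  | zero => simp
  | succ q ih =>
    rw [Nat.mul_succ, hf.sum_range_mul_add q le_rfl, ih, Finset.sum_range_succ]
    ring

lemma sum_range (hf : TwistedPeriodic p f) :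
    TwistedPeriodic (2 * p) fun m => ∑ j ∈ Finset.range m, f j := by
  intro k l hl
  dsimp only
  rcases lt_or_ge l p with hlp | hpl
  · rw [show 2 * p * k + l = p * (2 * k) + l by ring, hf.sum_range_mul_add _ hlp.le,
      hf.sum_range_mul, sum_range_u_two_mul, u_two_mul]
    ring
  · obtain ⟨r, rfl⟩ := Nat.exists_eq_add_of_le hpl
    have hr : r ≤ p := by omega
    have hk : 2 * p * k + (p + r) = p * (2 * k + 1) + r := by ring
    rw [hk, show p + r = p * 1 + r by rw [mul_one], hf.sum_range_mul_add _ hr,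
      hf.sum_range_mul_add _ hr, hf.sum_range_mul, hf.sum_range_mul, sum_range_u_two_mul_add_one,
      u_two_mul_add_one, Finset.sum_range_one, u_zero, show u 1 = 1 by decide]
    ring

end TwistedPeriodic

lemma Sig_twistedPeriodic (n : ℕ) : TwistedPeriodic (2 ^ n) fun k => Sig k n := by
  induction n with
  | zero =>
    intro k l hl
    obtain rfl : l = 0 := by omega
    simp [Sig_zero_right, u_zero]
  | succ n ih =>
    simpa only [Sig_succ_right, pow_succ'] using ih.sum_range

theorem sig_column_periodicity (n : ℕ) (hn : 1 ≤ n) :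
    (∀ k l : ℕ, l ≤ 2 ^ n - 1 → Sig (2 ^ n * k + l) n = -(u k) * Sig l n) ∧
    (∀ k : ℕ, Sig (2 ^ n * k) n = 0) := by
  have periodic := Sig_twistedPeriodic n
  refine ⟨fun k l hl => periodic k l (Nat.lt_of_le_sub_one (Nat.two_pow_pos n) hl), fun k => ?_⟩
  obtain ⟨m, rfl⟩ : ∃ m, n = m + 1 := ⟨n - 1, by omega⟩
  simpa [Sig_succ_right] using periodic k 0 (Nat.two_pow_pos _)
end

section
/- For every integer n ≥ 1 and every real x ∈ [0, 1], one has f_n(x + 1) = −1 − f_n(x). -/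
/-- The renormalized points `x^k_n = 2^{-(n-1)(n-2)/2} Σ^k_n`. -/
noncomputable def xkn (n k : ℕ) : ℝ := (Sig k n : ℝ) / 2 ^ ((n - 1) * (n - 2) / 2)

/-- The piecewise linear interpolation `f n` of the points `x^k_n` at `k/2^{n-1}`,
vanishing on the nonpositive reals. -/
noncomputable def f (n : ℕ) (x : ℝ) : ℝ :=
  if x ≤ 0 then 0
  else
    xkn n ⌊(2 : ℝ) ^ (n - 1) * x⌋₊ +
      (2 : ℝ) ^ (n - 1) * (x - (⌊(2 : ℝ) ^ (n - 1) * x⌋₊ : ℝ) / 2 ^ (n - 1)) *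
        (xkn n (⌊(2 : ℝ) ^ (n - 1) * x⌋₊ + 1) - xkn n ⌊(2 : ℝ) ^ (n - 1) * x⌋₊)

/-!
Column `n + 1` of `Sig` is the sequence of partial sums of column `n`. Shifting by `2 ^ m`
negates the Thue–Morse sequence on `[0, 2 ^ m)`, and taking partial sums preserves this
antisymmetry in every column `j ≤ m`, because the sum of an antisymmetric column over a block of
length `2 ^ (m + 1)` vanishes. On the diagonal the block sum survives:
`Σ^{2^n}_{n+1} = 2^{n-1} Σ^{2^{n-1}}_n = ⋯ = -2^{C(n,2)}`, so
`Σ^{2^n + k}_{n+1} = -2^{C(n,2)} - Σ^k_{n+1}` for `k ≤ 2 ^ n`. After the normalisation this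
reads `x^{2^{n-1}+k}_n = -1 - x^k_n`, and `f n`, the linear interpolation of these values,
inherits it.
-/

open Finset

lemma u_two_pow_add {m k : ℕ} (hk : k < 2 ^ m) : u (2 ^ m + k) = -u k := by
  obtain ⟨z, hz⟩ : ∃ z, m = (Nat.digits 2 k).length + z :=
    Nat.exists_eq_add_of_le ((Nat.digits_length_le_iff (by norm_num) k).2 hk)
  have hdigits := Nat.digits_append_zeroes_append_digits (b := 2) (n := k) (k := z) (by norm_num)
    one_pos
  rw [← hz, mul_one, add_comm] at hdigits
  rw [u, u, ← hdigits]
  simp [pow_succ]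

lemma sum_range_add_of_forall_add_eq_sub {G : Type*} [AddCommGroup G] {a : ℕ → G} {q L : ℕ}
    {c : G} (h : ∀ i < L, a (q + i) = c - a i) {k : ℕ} (hk : k ≤ L) :
    ∑ i ∈ range (q + k), a i = ∑ i ∈ range q, a i + k • c - ∑ i ∈ range k, a i := by
  rw [sum_range_add, sum_congr rfl fun i hi => h i (by simp at hi; omega), sum_sub_distrib,
    sum_const, card_range]
  abel

lemma Sig_succ_eq_sum (k n : ℕ) : Sig k (n + 1) = ∑ i ∈ range k, Sig i n := by
  induction k with
  | zero => rfl
  | succ k ih => rw [Sig, ih, sum_range_succ, add_comm]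

lemma Sig_add_succ_of_forall_add_eq_sub {j q L : ℕ} {c : ℤ}
    (h : ∀ i < L, Sig (q + i) j = c - Sig i j) {k : ℕ} (hk : k ≤ L) :
    Sig (q + k) (j + 1) = Sig q (j + 1) + k * c - Sig k (j + 1) := by
  simpa [Sig_succ_eq_sum] using sum_range_add_of_forall_add_eq_sub (a := (Sig · j)) h hk

lemma Sig_two_pow_add {j m : ℕ} (hj : j ≤ m) {k : ℕ} (hk : k < 2 ^ m) :
    Sig (2 ^ m + k) j = -Sig k j := by
  induction j generalizing m k with
  | zero => simpa [Sig] using u_two_pow_add hk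
  | succ j ih =>
    obtain ⟨m, rfl⟩ : ∃ m', m = m' + 1 := ⟨m - 1, by omega⟩
    have hshift : ∀ {m}, j ≤ m → ∀ {k}, k ≤ 2 ^ m →
        Sig (2 ^ m + k) (j + 1) = Sig (2 ^ m) (j + 1) - Sig k (j + 1) := fun hjm _ hk => by
      simpa using Sig_add_succ_of_forall_add_eq_sub (c := 0)
        (fun i hi => (ih hjm hi).trans (zero_sub _).symm) hk
    have hzero : Sig (2 ^ (m + 1)) (j + 1) = 0 := by
      simpa [← two_mul, ← pow_succ'] using hshift (m := m) (by omega) le_rfl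
    simpa [hzero] using hshift (by omega) hk.le

lemma Sig_two_pow_add_succ_self {n k : ℕ} (hk : k ≤ 2 ^ n) :
    Sig (2 ^ n + k) (n + 1) = Sig (2 ^ n) (n + 1) - Sig k (n + 1) := by
  simpa using Sig_add_succ_of_forall_add_eq_sub (c := 0)
    (fun i hi => (Sig_two_pow_add le_rfl hi).trans (zero_sub _).symm) hk

lemma Sig_two_pow_succ_self (n : ℕ) : Sig (2 ^ n) (n + 1) = -2 ^ n.choose 2 := by
  induction n with
  | zero => simp [Sig, u]
  | succ n ih =>
    have h := Sig_add_succ_of_forall_add_eq_sub (c := -2 ^ n.choose 2)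
      (fun i hi => (Sig_two_pow_add_succ_self hi.le).trans (by rw [ih])) (le_refl (2 ^ n))
    rw [← two_mul, ← pow_succ'] at h
    rw [h, Nat.choose_succ_succ', Nat.choose_one_right, pow_add]
    push_cast
    ring

lemma xkn_two_pow_add {n k : ℕ} (hn : 1 ≤ n) (hk : k ≤ 2 ^ (n - 1)) :
    xkn n (2 ^ (n - 1) + k) = -1 - xkn n k := by
  obtain ⟨m, rfl⟩ : ∃ m, n = m + 1 := ⟨n - 1, by omega⟩
  simp only [xkn, Nat.add_sub_cancel] at hk ⊢
  rw [show m + 1 - 2 = m - 1 by omega, ← Nat.choose_two_right, Sig_two_pow_add_succ_self hk,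
    Sig_two_pow_succ_self]
  push_cast
  field_simp

lemma xkn_zero {n : ℕ} (hn : 1 ≤ n) : xkn n 0 = 0 := by
  obtain ⟨m, rfl⟩ : ∃ m, n = m + 1 := ⟨n - 1, by omega⟩
  simp [xkn, Sig]

noncomputable def linInterp (p : ℕ → ℝ) (t : ℝ) : ℝ :=
  p ⌊t⌋₊ + (t - ⌊t⌋₊) * (p (⌊t⌋₊ + 1) - p ⌊t⌋₊)

lemma linInterp_eq_of_mem_Icc (p : ℕ → ℝ) {t : ℝ} {k : ℕ} (hk : (k : ℝ) ≤ t)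
    (hk' : t ≤ k + 1) :
    linInterp p t = p k + (t - k) * (p (k + 1) - p k) := by
  rcases hk'.lt_or_eq with hlt | rfl
  · rw [linInterp, (Nat.floor_eq_iff ((Nat.cast_nonneg k).trans hk)).2 ⟨hk, hlt⟩]
  · rw [linInterp, ← Nat.cast_add_one, Nat.floor_natCast]
    push_cast
    ring

lemma f_eq_linInterp {n : ℕ} (hn : 1 ≤ n) {x : ℝ} (hx : 0 ≤ x) :
    f n x = linInterp (xkn n) (2 ^ (n - 1) * x) := by
  rcases hx.lt_or_eq with hpos | rfl
  · rw [f, if_neg hpos.not_ge, linInterp, mul_sub (2 ^ (n - 1) : ℝ) x,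
      mul_div_cancel₀ _ (by positivity : (2 : ℝ) ^ (n - 1) ≠ 0)]
  · simp [f, linInterp, xkn_zero hn]

lemma exists_nat_le_le_add_one {t : ℝ} {N : ℕ} (hN : 0 < N) (ht : 0 ≤ t) (htN : t ≤ N) :
    ∃ k : ℕ, k < N ∧ (k : ℝ) ≤ t ∧ t ≤ k + 1 := by
  rcases htN.lt_or_eq with hlt | rfl
  · exact ⟨⌊t⌋₊, (Nat.floor_lt ht).2 hlt, Nat.floor_le ht, (Nat.lt_floor_add_one t).le⟩
  · refine ⟨N - 1, by omega, ?_, ?_⟩ <;> rw [Nat.cast_sub hN] <;> simp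

theorem f_reflection (n : ℕ) (hn : 1 ≤ n) (x : ℝ) (hx : x ∈ Set.Icc (0 : ℝ) 1) :
    f n (x + 1) = -1 - f n x := by
  obtain ⟨k, hkP, hk, hk'⟩ := exists_nat_le_le_add_one (t := 2 ^ (n - 1) * x) (N := 2 ^ (n - 1))
    (by positivity) (mul_nonneg (by positivity) hx.1)
    (by push_cast; exact mul_le_of_le_one_right (by positivity) hx.2)
  rw [f_eq_linInterp hn (by linarith [hx.1]), f_eq_linInterp hn hx.1,
    linInterp_eq_of_mem_Icc _ hk hk', linInterp_eq_of_mem_Icc (k := 2 ^ (n - 1) + k) _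
      (by push_cast; linarith) (by push_cast; linarith),
    add_assoc, xkn_two_pow_add hn hkP.le, xkn_two_pow_add hn hkP]
  push_cast
  ring
end
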